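/- In the Poisson algebra of power series, for a word w' = p_{γ1} ⋯ p_{γr} of length r in the p-variables and f of even degree, the r-fold iterated bracket (1/r!){…{{w', f}, f}…, f} (with r brackets) equals κ_{γ1} ⋯ κ_{γr} · (∂f/∂p_{γ1}) ⋯ (∂f/∂p_{γr}); i.e. restricting a monomial of pure p-degree r to the Lagrangian graph L_f of df coincides with the normalized r-fold bracket with f. -/

import Mathlib

/-!
When `f` depends on the `q`-variables only, `{·, f}` is a derivation sending `p_γ` to
`κ_γ ∂f/∂q_γ`, and these images are again functions of `q` alone, hence killed by `{·, f}`.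
Applying the derivation `r` times to `p_{γ₁} ⋯ p_{γᵣ}` therefore differentiates every factor
exactly once, and the `r!` orders in which this can happen all give the same product.
-/

open MvPolynomial

/-- The graded Poisson bracket on the algebra of polynomials in the variables
`p γ = X (Sum.inl γ)` and `q γ = X (Sum.inr γ)`, determined by
`{p γ, q γ'} = κ γ δ_{γγ'}` and the Leibniz rule:
`{F, G} = Σ_γ κ γ (∂F/∂p_γ ∂G/∂q_γ - ∂F/∂q_γ ∂G/∂p_γ)`. -/
noncomputable def pbracket {Γ : Type*} [Fintype Γ] (κ : Γ → ℤ)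
    (F G : MvPolynomial (Γ ⊕ Γ) ℚ) : MvPolynomial (Γ ⊕ Γ) ℚ :=
  ∑ γ : Γ, (κ γ : MvPolynomial (Γ ⊕ Γ) ℚ) *
    (pderiv (Sum.inl γ) F * pderiv (Sum.inr γ) G
      - pderiv (Sum.inr γ) F * pderiv (Sum.inl γ) G)

namespace Derivation

variable {R A : Type*} [CommSemiring R] [CommSemiring A] [Algebra R A] (D : Derivation R A A)

theorem apply_prod {ι : Type*} [DecidableEq ι] (s : Finset ι) (x : ι → A) :
    D (∏ i ∈ s, x i) = ∑ i ∈ s, D (x i) * ∏ j ∈ s.erase i, x j := by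
  induction s using Finset.induction_on with
  | empty => simp
  | insert a s ha ih =>
    rw [Finset.prod_insert ha, leibniz, ih, Finset.sum_insert ha, Finset.erase_insert ha,
      smul_eq_mul, smul_eq_mul, Finset.mul_sum, add_comm, mul_comm (∏ i ∈ s, x i)]
    congr 1
    refine Finset.sum_congr rfl fun i hi => ?_
    rw [Finset.erase_insert_of_ne (ne_of_mem_of_not_mem hi ha).symm, Finset.prod_insert
      fun h => ha (Finset.mem_of_mem_erase h)]
    ring

theorem iterate_map_sum (n : ℕ) {ι : Type*} (s : Finset ι) (x : ι → A) :
    D^[n] (∑ i ∈ s, x i) = ∑ i ∈ s, D^[n] (x i) := by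
  rw [← coeFn_coe, ← Module.End.coe_pow, map_sum]

theorem iterate_mul_of_apply_eq_zero {c : A} (hc : D c = 0) (n : ℕ) (y : A) :
    D^[n] (c * y) = c * D^[n] y := by
  induction n with
  | zero => rfl
  | succ n ih => simp [Function.iterate_succ_apply', ih, hc]

theorem iterate_card_prod {ι : Type*} [DecidableEq ι] (x a : ι → A)
    (hx : ∀ i, D (x i) = a i) (ha : ∀ i, D (a i) = 0) (s : Finset ι) :
    D^[s.card] (∏ i ∈ s, x i) = s.card.factorial • ∏ i ∈ s, a i := by
  suffices ∀ n (s : Finset ι), s.card = n →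
      D^[n] (∏ i ∈ s, x i) = n.factorial • ∏ i ∈ s, a i from this _ s rfl
  intro n
  induction n with
  | zero => intro s hs; simp [Finset.card_eq_zero.mp hs]
  | succ n ih =>
    intro s hs
    have term : ∀ i ∈ s, D^[n] (a i * ∏ j ∈ s.erase i, x j) = n.factorial • ∏ j ∈ s, a j := by
      intro i hi
      rw [D.iterate_mul_of_apply_eq_zero (ha i), ih _ (by simp [hi, hs]), mul_smul_comm,
        Finset.mul_prod_erase s a hi]
    rw [Function.iterate_succ_apply, apply_prod, iterate_map_sum]
    simp only [hx]
    rw [Finset.sum_congr rfl term, Finset.sum_const, hs, smul_smul, Nat.factorial_succ]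

end Derivation

theorem pderiv_inl_rename_inr {R σ τ : Type*} [CommSemiring R] (δ : σ) (a : MvPolynomial τ R) :
    pderiv (Sum.inl δ) (rename Sum.inr a) = 0 :=
  pderiv_eq_zero_of_notMem_vars fun h => by simpa using mem_vars_rename Sum.inr a h

section PoissonBracket

variable {Γ : Type*} [Fintype Γ] (κ : Γ → ℤ)

noncomputable def pbracketDerivation (f : MvPolynomial (Γ ⊕ Γ) ℚ) :
    Derivation ℚ (MvPolynomial (Γ ⊕ Γ) ℚ) (MvPolynomial (Γ ⊕ Γ) ℚ) :=
  ∑ γ : Γ, ((κ γ * pderiv (Sum.inr γ) f) • pderiv (Sum.inl γ)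
    - (κ γ * pderiv (Sum.inl γ) f) • pderiv (Sum.inr γ))

theorem coe_pbracketDerivation (f : MvPolynomial (Γ ⊕ Γ) ℚ) :
    ⇑(pbracketDerivation κ f) = fun G => pbracket κ G f := by
  funext G
  rw [pbracketDerivation, ← Derivation.coeFnAddMonoidHom_apply, map_sum]
  simp only [Derivation.coeFnAddMonoidHom_apply, Finset.sum_apply, Derivation.coe_sub,
    Derivation.coe_smul, Pi.sub_apply, Pi.smul_apply, smul_eq_mul, pbracket]
  exact Finset.sum_congr rfl fun γ _ => by ring

theorem pbracket_X_inl (δ : Γ) (f : MvPolynomial (Γ ⊕ Γ) ℚ) :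
    pbracket κ (X (Sum.inl δ)) f = κ δ * pderiv (Sum.inr δ) f := by
  classical
  rw [pbracket, Finset.sum_eq_single δ]
  · simp
  · intro γ _ hγ
    simp [Ne.symm hγ]
  · simp

theorem pbracket_rename_inr (a b : MvPolynomial Γ ℚ) :
    pbracket κ (rename Sum.inr a) (rename Sum.inr b) = 0 := by
  simp [pbracket, pderiv_inl_rename_inr]

end PoissonBracket

theorem stmt19_general {Γ : Type*} [Fintype Γ] (κ : Γ → ℤ)
    (r : ℕ) (γ : Fin r → Γ)
    (f₀ : MvPolynomial Γ ℚ)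
    (f : MvPolynomial (Γ ⊕ Γ) ℚ) (hf : f = rename Sum.inr f₀) :
    ((r.factorial : ℚ)⁻¹) • (fun G => pbracket κ G f)^[r] (∏ i, X (Sum.inl (γ i)))
      = ∏ i, (κ (γ i) : MvPolynomial (Γ ⊕ Γ) ℚ) * pderiv (Sum.inr (γ i)) f := by
  have hconst : ∀ i, pbracket κ (κ (γ i) * pderiv (Sum.inr (γ i)) f) f = 0 := by
    intro i
    rw [hf, pderiv_rename Sum.inr_injective, ← map_intCast (rename (R := ℚ) Sum.inr), ← map_mul,
      pbracket_rename_inr]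
  have key := (pbracketDerivation κ f).iterate_card_prod (fun i => X (Sum.inl (γ i)))
    (fun i => κ (γ i) * pderiv (Sum.inr (γ i)) f)
    (by simp [coe_pbracketDerivation, pbracket_X_inl]) (by simpa only [coe_pbracketDerivation])
    Finset.univ
  rw [coe_pbracketDerivation, Finset.card_univ, Fintype.card_fin] at key
  rw [key, ← Nat.cast_smul_eq_nsmul ℚ, smul_smul,
    inv_mul_cancel₀ (Nat.cast_ne_zero.mpr r.factorial_ne_zero), one_smul]

/-- For a word `w' = p_{γ₁} ⋯ p_{γᵣ}` of length `r` in the `p`-variables and `f`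
(of even degree) depending only on the dual variables, the normalized `r`-fold
iterated bracket `(1/r!) {…{{w', f}, f}…, f}` equals
`κ_{γ₁} ⋯ κ_{γᵣ} · (∂f/∂q_{γ₁}) ⋯ (∂f/∂q_{γᵣ})`, i.e. it coincides with the
restriction of the monomial `w'` of pure `p`-degree `r` to the Lagrangian graph
`L_f` of `df` (substituting each `p_γ` by `κ_γ ∂f/∂q_γ`). -/
theorem stmt19 {Γ : Type*} [Fintype Γ] [DecidableEq Γ] (κ : Γ → ℤ)
    (r : ℕ) (γ : Fin r → Γ)
    (f₀ : MvPolynomial Γ ℚ)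
    (f : MvPolynomial (Γ ⊕ Γ) ℚ) (hf : f = rename Sum.inr f₀) :
    ((r.factorial : ℚ)⁻¹) • (fun G => pbracket κ G f)^[r] (∏ i, X (Sum.inl (γ i)))
      = ∏ i, (κ (γ i) : MvPolynomial (Γ ⊕ Γ) ℚ) * pderiv (Sum.inr (γ i)) f :=
  stmt19_general κ r γ f₀ f hf
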